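/- arXiv:2004.01035 — 2 statements merged into one kernel-verified Lean document; each statement's English description precedes it below -/
import Mathlib

section
/- Assume that d_{1,-1}, d_{1,0}, d_{1,1} are not all zero, d_{-1,-1}, d_{-1,0}, d_{-1,1} are not all zero, d_{-1,1}, d_{0,1}, d_{1,1} are not all zero, and d_{-1,-1}, d_{0,-1}, d_{1,-1} are not all zero. If K(x,y,t) = -f₁(x,y)·f₂(x,y) with f₁, f₂ ∈ ℂ[x,y] nonconstant, then there exists c ∈ ℂ \ {0} such that, setting g₁ = c·f₁ and g₂ = c⁻¹·f₂ (so that K = -g₁·g₂), one of the following holds: (i) the coefficientwise complex conjugate of g₁ equals g₂; (ii) the coefficientwise complex conjugate of g₁ equals -g₂; (iii) g₁ and g₂ both have all their coefficients in ℝ. -/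
open MvPolynomial

noncomputable section

variable (d : ℤ → ℤ → ℝ) (t : ℝ)

/-- The kernel polynomial `K(x,y,t) = xy(1 - t·Σ_{(i,j)∈{-1,0,1}²} d_{i,j} x^i y^j)`
as an element of `ℂ[x,y] = MvPolynomial (Fin 2) ℂ` (variable `0` is `x`, variable `1` is `y`). -/
def kernelK : MvPolynomial (Fin 2) ℂ :=
  X 0 * X 1 - C ((t : ℝ) : ℂ) *
    ∑ i ∈ Finset.range 3, ∑ j ∈ Finset.range 3,
      C ((d ((i : ℤ) - 1) ((j : ℤ) - 1) : ℝ) : ℂ) * X 0 ^ i * X 1 ^ j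

/-- The standing hypotheses: the weights `d_{i,j}` for `(i,j) ∈ {-1,0,1}²` lie in `[0,1]`
and sum to `1`, `t ∈ (0,1)`, and `t` is transcendental over `ℚ(d_{i,j})`, i.e. no nonzero
polynomial with coefficients in the subfield of `ℝ` generated by the `d_{i,j}` vanishes at `t`. -/
def WalkHyp : Prop :=
  (∀ i ∈ ({-1, 0, 1} : Set ℤ), ∀ j ∈ ({-1, 0, 1} : Set ℤ), 0 ≤ d i j ∧ d i j ≤ 1) ∧
  (∑ i ∈ ({-1, 0, 1} : Finset ℤ), ∑ j ∈ ({-1, 0, 1} : Finset ℤ), d i j = 1) ∧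
  (0 < t ∧ t < 1) ∧
  (∀ p : Polynomial ℝ,
      (∀ n, p.coeff n ∈
        Subfield.closure
          {x : ℝ | ∃ i ∈ ({-1, 0, 1} : Set ℤ), ∃ j ∈ ({-1, 0, 1} : Set ℤ), x = d i j}) →
      Polynomial.eval t p = 0 → p = 0)

/-- The model is degenerate if `K` is reducible in `ℂ[x,y]`, or has degree `≤ 1` in `x`,
or degree `≤ 1` in `y`. -/
def Degenerate : Prop :=
  ¬ Irreducible (kernelK d t) ∨
    degreeOf 0 (kernelK d t) ≤ 1 ∨ degreeOf 1 (kernelK d t) ≤ 1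

/-- The bihomogenized kernel
`K̄(x₀,x₁,y₀,y₁) = x₀x₁y₀y₁ - t Σ_{i,j=0}^{2} d_{i-1,j-1} x₀^i x₁^{2-i} y₀^j y₁^{2-j}`,
with variables `0 ↦ x₀`, `1 ↦ x₁`, `2 ↦ y₀`, `3 ↦ y₁`. -/
def kernelKbar : MvPolynomial (Fin 4) ℂ :=
  X 0 * X 1 * X 2 * X 3 - C ((t : ℝ) : ℂ) *
    ∑ i ∈ Finset.range 3, ∑ j ∈ Finset.range 3,
      C ((d ((i : ℤ) - 1) ((j : ℤ) - 1) : ℝ) : ℂ) *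
        X 0 ^ i * X 1 ^ (2 - i) * X 2 ^ j * X 3 ^ (2 - j)

/-- `([a:b],[c:e])` lies on the kernel curve `Ē_t ⊆ ℙ¹(ℂ)×ℙ¹(ℂ)`. -/
def OnKernelCurve (a b c e : ℂ) : Prop :=
  eval ![a, b, c, e] (kernelKbar d t) = 0

/-- `([a:b],[c:e])` is a singular point of the kernel curve `Ē_t`: it lies on `Ē_t`
and all four partial derivatives of `K̄` vanish there. -/
def SingularAt (a b c e : ℂ) : Prop :=
  OnKernelCurve d t a b c e ∧
    ∀ k : Fin 4, eval ![a, b, c, e] (pderiv k (kernelKbar d t)) = 0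

/-- `Ā₁(x₀,x₁)`: the coefficient of `y₀²` in `K̄`. -/
def Abar1 : MvPolynomial (Fin 2) ℂ :=
  -(C ((t : ℝ) : ℂ)) *
    (C ((d (-1) 1 : ℝ) : ℂ) * X 1 ^ 2 + C ((d 0 1 : ℝ) : ℂ) * X 0 * X 1 +
      C ((d 1 1 : ℝ) : ℂ) * X 0 ^ 2)

/-- `B̄₁(x₀,x₁)`: the coefficient of `y₀y₁` in `K̄`. -/
def Bbar1 : MvPolynomial (Fin 2) ℂ :=
  X 0 * X 1 - C ((t : ℝ) : ℂ) *
    (C ((d (-1) 0 : ℝ) : ℂ) * X 1 ^ 2 + C ((d 0 0 : ℝ) : ℂ) * X 0 * X 1 +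
      C ((d 1 0 : ℝ) : ℂ) * X 0 ^ 2)

/-- `C̄₁(x₀,x₁)`: the coefficient of `y₁²` in `K̄`. -/
def Cbar1 : MvPolynomial (Fin 2) ℂ :=
  -(C ((t : ℝ) : ℂ)) *
    (C ((d (-1) (-1) : ℝ) : ℂ) * X 1 ^ 2 + C ((d 0 (-1) : ℝ) : ℂ) * X 0 * X 1 +
      C ((d 1 (-1) : ℝ) : ℂ) * X 0 ^ 2)

/-- The discriminant `Δ₁(x₀,x₁) = B̄₁² - 4Ā₁C̄₁`, homogeneous of degree 4. -/
def Delta1 : MvPolynomial (Fin 2) ℂ :=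
  Bbar1 d t ^ 2 - 4 * Abar1 d t * Cbar1 d t

/-- `Ā₂(y₀,y₁)`: the coefficient of `x₀²` in `K̄`. -/
def Abar2 : MvPolynomial (Fin 2) ℂ :=
  -(C ((t : ℝ) : ℂ)) *
    (C ((d 1 (-1) : ℝ) : ℂ) * X 1 ^ 2 + C ((d 1 0 : ℝ) : ℂ) * X 0 * X 1 +
      C ((d 1 1 : ℝ) : ℂ) * X 0 ^ 2)

/-- `B̄₂(y₀,y₁)`: the coefficient of `x₀x₁` in `K̄`. -/
def Bbar2 : MvPolynomial (Fin 2) ℂ :=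
  X 0 * X 1 - C ((t : ℝ) : ℂ) *
    (C ((d 0 (-1) : ℝ) : ℂ) * X 1 ^ 2 + C ((d 0 0 : ℝ) : ℂ) * X 0 * X 1 +
      C ((d 0 1 : ℝ) : ℂ) * X 0 ^ 2)

/-- `C̄₂(y₀,y₁)`: the coefficient of `x₁²` in `K̄`. -/
def Cbar2 : MvPolynomial (Fin 2) ℂ :=
  -(C ((t : ℝ) : ℂ)) *
    (C ((d (-1) (-1) : ℝ) : ℂ) * X 1 ^ 2 + C ((d (-1) 0 : ℝ) : ℂ) * X 0 * X 1 +
      C ((d (-1) 1 : ℝ) : ℂ) * X 0 ^ 2)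

/-- The discriminant `Δ₂(y₀,y₁) = B̄₂² - 4Ā₂C̄₂`, homogeneous of degree 4. -/
def Delta2 : MvPolynomial (Fin 2) ℂ :=
  Bbar2 d t ^ 2 - 4 * Abar2 d t * Cbar2 d t

/-- `[a:b] ∈ ℙ¹(ℂ)` is a double root of the homogeneous polynomial `p`:
`(bX - aY)²` divides `p(X,Y)`. -/
def IsDoubleRootAt (a b : ℂ) (p : MvPolynomial (Fin 2) ℂ) : Prop :=
  (C b * X 0 - C a * X 1) ^ 2 ∣ p

/-- The step set of the model is included in a closed half plane whose boundary passes
through the origin. -/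
def StepSetInHalfPlane : Prop :=
  ∃ u v : ℝ, (u, v) ≠ (0, 0) ∧
    ∀ i ∈ ({-1, 0, 1} : Set ℤ), ∀ j ∈ ({-1, 0, 1} : Set ℤ),
      (i, j) ≠ (0, 0) → d i j ≠ 0 → 0 ≤ u * (i : ℝ) + v * (j : ℝ)

/-- `α₂ = β₂` for the first family of (G0). -/
def alpha2 : ℝ := 1 - 2*t*(d 0 0) + t^2*(d 0 0)^2 - 4*t^2*(d (-1) 1)*(d 1 (-1))

/-- `α₃` for the first family of (G0). -/
def alpha3 : ℝ := 2*t^2*(d 1 0)*(d 0 0) - 2*t*(d 1 0) - 4*t^2*(d 0 1)*(d 1 (-1))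

/-- `α₄` for the first family of (G0). -/
def alpha4 : ℝ := t^2*((d 1 0)^2 - 4*(d 1 1)*(d 1 (-1)))

/-- `β₃` for the first family of (G0). -/
def beta3 : ℝ := 2*t^2*(d 0 1)*(d 0 0) - 2*t*(d 0 1) - 4*t^2*(d 1 0)*(d (-1) 1)

/-- `β₄` for the first family of (G0). -/
def beta4 : ℝ := t^2*((d 0 1)^2 - 4*(d 1 1)*(d (-1) 1))

/-- The kernel polynomial as a function `ℂ × ℂ → ℂ`:
`K(x,y,t) = xy - t Σ_{i,j=0}^{2} d_{i-1,j-1} x^i y^j`. -/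
def kernelKfun (x y : ℂ) : ℂ :=
  x * y - ((t : ℝ) : ℂ) *
    ∑ i ∈ Finset.range 3, ∑ j ∈ Finset.range 3,
      ((d ((i : ℤ) - 1) ((j : ℤ) - 1) : ℝ) : ℂ) * x ^ i * y ^ j

/-!
Since `t` is transcendental over the field generated by the weights, `K` has no factor in `y`
alone: at a root `y₀` of such a factor, `K(x, y₀)` would vanish for every `x`; then `y₀` is
algebraic over the weights, so `y₀ = t·(d_{0,-1} + d_{0,0} y₀ + d_{0,1} y₀²)` forces `y₀ = 0`,
and the weights `d_{i,-1}` all vanish. As `K` has degree 2 in `x`, both factors have degree 1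
in `x` and are irreducible. The weights are real, so `K` is fixed by complex conjugation and
the conjugate of the prime `f₁` is associated to `f₁` or to `f₂`. If `conj f₁ = μ f₁` then
`|μ| = 1` and a square root `c` of `μ` makes `c f₁` and `c⁻¹ f₂` real; if `conj f₁ = μ f₂` then
`μ` is real and `c = |μ|^(-1/2)` gives the first or second alternative.
-/

open ComplexConjugate

theorem Real.exists_mul_eq_inv_or_neg_inv {r : ℝ} (hr : r ≠ 0) :
    ∃ c : ℝ, c ≠ 0 ∧ (c * r = c⁻¹ ∨ c * r = -c⁻¹) := by
  have hs : Real.sqrt |r| ≠ 0 := (Real.sqrt_pos.mpr (abs_pos.mpr hr)).ne'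
  have hsq : Real.sqrt |r| ^ 2 = |r| := Real.sq_sqrt (abs_nonneg r)
  refine ⟨(Real.sqrt |r|)⁻¹, inv_ne_zero hs, ?_⟩
  rw [inv_inv]
  rcases abs_choice r with h | h
  · left; field_simp; linarith
  · right; field_simp; linarith

theorem Complex.exists_conj_mul_eq_self {μ : ℂ} (hμ : conj μ * μ = 1) :
    ∃ c : ℂ, c ≠ 0 ∧ conj c * μ = c := by
  obtain ⟨c, hc⟩ := IsAlgClosed.exists_pow_nat_eq μ two_pos
  have hc0 : c ≠ 0 := by rintro rfl; simp [← hc] at hμ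
  have hnorm : conj c * c = 1 := by
    have h : (Complex.normSq c : ℂ) ^ 2 = 1 := by
      rw [← Complex.mul_conj, mul_pow, ← map_pow, hc, mul_comm, hμ]
    have h' : Complex.normSq c ^ 2 = 1 := by exact_mod_cast h
    rw [mul_comm, Complex.mul_conj,
      (pow_eq_one_iff_of_nonneg (Complex.normSq_nonneg c) two_ne_zero).mp h', Complex.ofReal_one]
  exact ⟨c, hc0, by rw [← hc]; linear_combination c * hnorm⟩

theorem Complex.exists_conj_mul_eq_inv_or_neg_inv {μ : ℂ} (hμ : conj μ = μ) (h0 : μ ≠ 0) :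
    ∃ c : ℂ, c ≠ 0 ∧ (conj c * μ = c⁻¹ ∨ conj c * μ = -c⁻¹) := by
  obtain ⟨r, rfl⟩ := Complex.conj_eq_iff_real.mp hμ
  obtain ⟨c, hc0, hc⟩ := Real.exists_mul_eq_inv_or_neg_inv (Complex.ofReal_ne_zero.mp h0)
  refine ⟨c, Complex.ofReal_ne_zero.mpr hc0, ?_⟩
  rw [Complex.conj_ofReal]
  exact_mod_cast hc

namespace MvPolynomial

theorem exists_eval_eq_zero_of_not_isUnit {σ k : Type*} [Field k] [IsAlgClosed k] [Finite σ]
    {p : MvPolynomial σ k} (hp : ¬ IsUnit p) : ∃ x : σ → k, eval x p = 0 := by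
  have hrad : (Ideal.span {p}).radical ≠ ⊤ := by
    rwa [Ne, Ideal.radical_eq_top, Ideal.span_singleton_eq_top]
  obtain ⟨x, hx⟩ : (zeroLocus k (Ideal.span {p})).Nonempty := by
    rw [Set.nonempty_iff_ne_empty]
    intro hempty
    rw [← vanishingIdeal_zeroLocus_eq_radical (K := k), hempty, vanishingIdeal_empty] at hrad
    exact hrad rfl
  exact ⟨x, by simpa using (mem_zeroLocus_iff.mp hx) p (Ideal.mem_span_singleton_self p)⟩

theorem eval_update_of_degreeOf_eq_zero {σ R : Type*} [CommSemiring R] [DecidableEq σ]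
    {p : MvPolynomial σ R} {i : σ} (hp : degreeOf i p = 0) (x : σ → R) (a : R) :
    eval (Function.update x i a) p = eval x p := by
  refine hom_congr_vars (by ext; simp) (fun j hj _ => ?_) rfl
  have hji : j ≠ i := by
    rintro rfl
    exact (mem_vars_iff_degreeOf_ne_zero.mp hj) hp
  simp [Function.update_of_ne hji]

theorem irreducible_of_degreeOf_le_one {σ R : Type*} [CommRing R] [IsDomain R]
    {f : MvPolynomial σ R} {i : σ} (hf : f ≠ 0) (hnu : ¬ IsUnit f) (hdeg : degreeOf i f ≤ 1)
    (hdvd : ∀ g, g ∣ f → ¬ IsUnit g → degreeOf i g ≠ 0) : Irreducible f := by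
  refine ⟨hnu, fun a b hab => ?_⟩
  by_contra! hab'
  obtain ⟨ha, hb⟩ := mul_ne_zero_iff.mp (hab ▸ hf)
  have hsum := degreeOf_mul_eq (n := i) ha hb
  have := hdvd a (Dvd.intro b hab.symm) hab'.1
  have := hdvd b (Dvd.intro_left a hab.symm) hab'.2
  rw [← hab] at hsum
  omega

theorem map_starRingEnd_map_starRingEnd {σ : Type*} (p : MvPolynomial σ ℂ) :
    map (starRingEnd ℂ) (map (starRingEnd ℂ) p) = p := by
  rw [map_map, show (starRingEnd ℂ).comp (starRingEnd ℂ) = RingHom.id ℂ from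
    RingHom.ext Complex.conj_conj, map_id]

variable {σ : Type*}

theorem exists_eq_C_mul_of_associated {p q : MvPolynomial σ ℂ} (h : Associated p q) :
    ∃ μ : ℂ, μ ≠ 0 ∧ q = C μ * p := by
  obtain ⟨u, rfl⟩ := h
  obtain ⟨μ, hμ, hu⟩ := isUnit_iff_eq_C_of_isReduced.mp u.isUnit
  exact ⟨μ, hμ.ne_zero, by rw [hu, mul_comm]⟩

theorem im_coeff_eq_zero_of_map_starRingEnd_eq {p : MvPolynomial σ ℂ}
    (hp : map (starRingEnd ℂ) p = p) (m : σ →₀ ℕ) : (p.coeff m).im = 0 :=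
  Complex.conj_eq_iff_im.mp (by rw [← coeff_map, hp])

theorem exists_rescaling_of_map_starRingEnd_mul_eq {f₁ f₂ : MvPolynomial σ ℂ}
    (hf₁ : Irreducible f₁) (hf₂ : Irreducible f₂)
    (hconj : map (starRingEnd ℂ) (f₁ * f₂) = f₁ * f₂) :
    ∃ c : ℂ, c ≠ 0 ∧
      (map (starRingEnd ℂ) (C c * f₁) = C c⁻¹ * f₂ ∨
       map (starRingEnd ℂ) (C c * f₁) = -(C c⁻¹ * f₂) ∨
       (map (starRingEnd ℂ) (C c * f₁) = C c * f₁ ∧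
        map (starRingEnd ℂ) (C c⁻¹ * f₂) = C c⁻¹ * f₂)) := by
  set φ := map (σ := σ) (starRingEnd ℂ)
  have hφφ : ∀ p, φ (φ p) = p := map_starRingEnd_map_starRingEnd
  have hφC : ∀ (a : ℂ) p, φ (C a * p) = C (conj a) * φ p := fun a p => by
    simp only [φ, map_mul, map_C]
  have hirr : Irreducible (φ f₁) := hf₁.map (mapEquiv σ starRingAut)
  have hprod : f₁ * f₂ = φ f₁ * φ f₂ := by rw [← map_mul, hconj]
  have hf₁0 := hf₁.ne_zero
  rcases (UniqueFactorizationMonoid.irreducible_iff_prime.mp hirr).dvd_or_dvd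
    ⟨φ f₂, hprod⟩ with h | h
  · obtain ⟨μ, hμ0, hμ⟩ := exists_eq_C_mul_of_associated (hirr.associated_of_dvd hf₁ h).symm
    have hμ1 : conj μ * μ = 1 := by
      have h : C (conj μ * μ) * f₁ = f₁ := by rw [C_mul, mul_assoc, ← hμ, ← hφC, ← hμ, hφφ]
      exact (map_eq_one_iff C (C_injective σ ℂ)).mp ((mul_eq_right₀ hf₁0).mp h)
    obtain ⟨c, hc0, hc⟩ := Complex.exists_conj_mul_eq_self hμ1
    have h₁ : φ (C c * f₁) = C c * f₁ := by rw [hφC, hμ, ← mul_assoc, ← C_mul, hc]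
    refine ⟨c, hc0, Or.inr (Or.inr ⟨h₁, mul_right_cancel₀ (b := C c * f₁) ?_ ?_⟩)⟩
    · simp [hc0, hf₁0]
    · have hsplit : C c⁻¹ * f₂ * (C c * f₁) = f₁ * f₂ := by
        rw [mul_mul_mul_comm, ← C_mul, inv_mul_cancel₀ hc0, C_1, one_mul, mul_comm]
      rw [hsplit, ← hconj, ← hsplit, map_mul φ (C c⁻¹ * f₂), h₁]
  · obtain ⟨μ, hμ0, hμ⟩ := exists_eq_C_mul_of_associated (hirr.associated_of_dvd hf₂ h).symm
    have hμ1 : conj μ = μ := by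
      have h : f₁ = C (conj μ) * φ f₂ := by rw [← hφC, ← hμ, hφφ]
      have h' : C (conj μ) * (f₁ * f₂) = C μ * (f₁ * f₂) := by
        linear_combination C (conj μ) * hprod + C (conj μ) * φ f₂ * hμ - C μ * f₂ * h
      exact C_injective σ ℂ (mul_right_cancel₀ (mul_ne_zero hf₁0 hf₂.ne_zero) h')
    obtain ⟨c, hc0, hc⟩ := Complex.exists_conj_mul_eq_inv_or_neg_inv hμ1 hμ0
    refine ⟨c, hc0, ?_⟩
    rw [hφC, hμ, ← mul_assoc, ← C_mul]
    rcases hc with hc | hc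
    · exact Or.inl (by rw [hc])
    · exact Or.inr (Or.inl (by rw [hc, C_neg, neg_mul]))

end MvPolynomial

theorem isAlgebraic_of_quadratic_eq_zero {F L : Type*} [Field F] [CommRing L] [Algebra F L]
    {a b c : F} (habc : ¬ (a = 0 ∧ b = 0 ∧ c = 0)) {u : L}
    (hu : algebraMap F L a + algebraMap F L b * u + algebraMap F L c * u ^ 2 = 0) :
    IsAlgebraic F u := by
  refine ⟨.C a + .C b * .X + .C c * .X ^ 2, fun h0 => habc ⟨?_, ?_, ?_⟩, by simpa using hu⟩
  · simpa using congrArg (Polynomial.coeff · 0) h0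
  · simpa using congrArg (Polynomial.coeff · 1) h0
  · simpa using congrArg (Polynomial.coeff · 2) h0

section Kernel

def weightField : Subfield ℝ :=
  Subfield.closure {x : ℝ | ∃ i ∈ ({-1, 0, 1} : Set ℤ), ∃ j ∈ ({-1, 0, 1} : Set ℤ), x = d i j}

variable {d t}

theorem weight_mem_weightField (i j : ℤ) (hi : i ∈ ({-1, 0, 1} : Set ℤ) := by simp)
    (hj : j ∈ ({-1, 0, 1} : Set ℤ) := by simp) : d i j ∈ weightField d :=
  Subfield.subset_closure ⟨i, hi, j, hj, rfl⟩

theorem WalkHyp.transcendental (h : WalkHyp d t) : Transcendental (weightField d) (t : ℂ) := by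
  rw [show (t : ℂ) = algebraMap ℝ ℂ t from rfl,
    transcendental_algebraMap_iff (algebraMap ℝ ℂ).injective, transcendental_iff]
  intro p hp
  have hmap := h.2.2.2 (p.map (algebraMap (weightField d) ℝ))
    (fun n => by rw [Polynomial.coeff_map]; exact (p.coeff n).2)
    (by rwa [Polynomial.eval_map_algebraMap])
  exact Polynomial.map_injective _ (algebraMap (weightField d) ℝ).injective
    (hmap.trans (Polynomial.map_zero _).symm)

theorem isAlgebraic_weight (i j : ℤ) (hi : i ∈ ({-1, 0, 1} : Set ℤ) := by simp)
    (hj : j ∈ ({-1, 0, 1} : Set ℤ) := by simp) : IsAlgebraic (weightField d) ((d i j : ℝ) : ℂ) :=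
  isAlgebraic_algebraMap (⟨d i j, weight_mem_weightField i j hi hj⟩ : weightField d)

theorem eval_kernelK (x y : ℂ) : eval ![x, y] (kernelK d t) =
    x * y - t * ((d (-1) (-1) + d (-1) 0 * y + d (-1) 1 * y ^ 2)
      + (d 0 (-1) + d 0 0 * y + d 0 1 * y ^ 2) * x
      + (d 1 (-1) + d 1 0 * y + d 1 1 * y ^ 2) * x ^ 2) := by
  simp only [kernelK, Finset.sum_range_succ, Finset.sum_range_zero, map_sub, map_mul, map_add,
    map_pow, eval_X, eval_C, Matrix.cons_val_zero, Matrix.cons_val_one]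
  norm_num only [map_zero]
  ring

theorem not_forall_eval_kernelK_eq_zero (h : WalkHyp d t)
    (hx2 : ¬ (d 1 (-1) = 0 ∧ d 1 0 = 0 ∧ d 1 1 = 0))
    (hy0 : ¬ (d (-1) (-1) = 0 ∧ d 0 (-1) = 0 ∧ d 1 (-1) = 0)) (y : ℂ) :
    ¬ ∀ x, eval ![x, y] (kernelK d t) = 0 := by
  intro hK
  have ht : (t : ℂ) ≠ 0 := Complex.ofReal_ne_zero.mpr h.2.2.1.1.ne'
  have e₀ := hK 0
  have e₁ := hK 1
  have e₂ := hK (-1)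
  simp only [eval_kernelK] at e₀ e₁ e₂
  have hrow₀ : (d (-1) (-1) : ℂ) + d (-1) 0 * y + d (-1) 1 * y ^ 2 = 0 :=
    (mul_eq_zero.mp (by linear_combination -e₀)).resolve_left ht
  have hrow₁ : y = (d 0 (-1) + d 0 0 * y + d 0 1 * y ^ 2) * t := by
    linear_combination (e₁ - e₂) / 2
  have hrow₂ : (d 1 (-1) : ℂ) + d 1 0 * y + d 1 1 * y ^ 2 = 0 :=
    (mul_eq_zero.mp (by linear_combination e₀ - (e₁ + e₂) / 2)).resolve_left ht
  have hy : IsAlgebraic (weightField d) y :=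
    isAlgebraic_of_quadratic_eq_zero (a := ⟨d 1 (-1), weight_mem_weightField 1 (-1)⟩)
      (b := ⟨d 1 0, weight_mem_weightField 1 0⟩) (c := ⟨d 1 1, weight_mem_weightField 1 1⟩)
      (by simpa [← Subtype.coe_inj] using hx2) hrow₂
  have hq : IsAlgebraic (weightField d) ((d 0 (-1) : ℂ) + d 0 0 * y + d 0 1 * y ^ 2) :=
    ((isAlgebraic_weight 0 (-1)).add ((isAlgebraic_weight 0 0).mul hy)).add
      ((isAlgebraic_weight 0 1).mul (hy.pow 2))
  have hq0 : (d 0 (-1) : ℂ) + d 0 0 * y + d 0 1 * y ^ 2 = 0 := by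
    -- otherwise `t = y / q` would be algebraic over the weights
    by_contra hq0
    exact h.transcendental (hq.of_mul (mem_nonZeroDivisors_of_ne_zero hq0) (hrow₁ ▸ hy))
  have hy0' : y = 0 := by rw [hrow₁, hq0, zero_mul]
  subst hy0'
  exact hy0 ⟨by simpa using hrow₀, by simpa using hq0, by simpa using hrow₂⟩

theorem map_starRingEnd_kernelK : map (starRingEnd ℂ) (kernelK d t) = kernelK d t := by
  simp [kernelK, map_sum, Complex.conj_ofReal]

theorem degreeOf_zero_kernelK_le : degreeOf 0 (kernelK d t) ≤ 2 := by
  have hterm : ∀ i ∈ Finset.range 3, ∀ (j : ℕ) (a : ℂ),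
      degreeOf 0 (C a * X 0 ^ i * X 1 ^ j : MvPolynomial (Fin 2) ℂ) ≤ 2 := by
    intro i hi j a
    rw [degreeOf_mul_X_pow_of_ne _ (by decide)]
    refine (degreeOf_C_mul_le _ _ _).trans ((degreeOf_pow_le _ _ _).trans ?_)
    rw [degreeOf_X, if_pos rfl, mul_one]
    exact Nat.lt_succ_iff.mp (Finset.mem_range.mp hi)
  refine (degreeOf_sub_le _ _ _).trans (max_le ?_ ?_)
  · rw [degreeOf_mul_X_of_ne _ (by decide), degreeOf_X, if_pos rfl]
    norm_num
  · refine (degreeOf_C_mul_le _ _ _).trans ((degreeOf_sum_le _ _ _).trans (Finset.sup_le ?_))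
    exact fun i hi => (degreeOf_sum_le _ _ _).trans (Finset.sup_le fun j _ => hterm i hi j _)

theorem degreeOf_zero_ne_zero_of_dvd_kernelK (h : WalkHyp d t)
    (hx2 : ¬ (d 1 (-1) = 0 ∧ d 1 0 = 0 ∧ d 1 1 = 0))
    (hy0 : ¬ (d (-1) (-1) = 0 ∧ d 0 (-1) = 0 ∧ d 1 (-1) = 0))
    {g : MvPolynomial (Fin 2) ℂ} (hg : g ∣ kernelK d t) (hu : ¬ IsUnit g) :
    degreeOf 0 g ≠ 0 := by
  intro h0
  obtain ⟨z, hz⟩ := exists_eval_eq_zero_of_not_isUnit hu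
  refine not_forall_eval_kernelK_eq_zero h hx2 hy0 (z 1) fun x => ?_
  obtain ⟨q, hq⟩ := hg
  have hpt : ![x, z 1] = Function.update z 0 x := by
    funext i
    fin_cases i <;> simp
  rw [hq, map_mul, hpt, eval_update_of_degreeOf_eq_zero h0, hz, zero_mul]

theorem irreducible_of_kernelK_eq_neg_mul (h : WalkHyp d t)
    (hx2 : ¬ (d 1 (-1) = 0 ∧ d 1 0 = 0 ∧ d 1 1 = 0))
    (hy0 : ¬ (d (-1) (-1) = 0 ∧ d 0 (-1) = 0 ∧ d 1 (-1) = 0))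
    {f₁ f₂ : MvPolynomial (Fin 2) ℂ} (hK : kernelK d t = -(f₁ * f₂))
    (hf₁ : ¬ IsUnit f₁) (hf₂ : ¬ IsUnit f₂) : Irreducible f₁ := by
  have hK0 : kernelK d t ≠ 0 := fun h0 =>
    not_forall_eval_kernelK_eq_zero h hx2 hy0 0 (by simp [h0])
  obtain ⟨hf₁0, hf₂0⟩ : f₁ ≠ 0 ∧ f₂ ≠ 0 := by
    simpa [hK, not_or] using hK0
  have hdvd₁ : f₁ ∣ kernelK d t := ⟨-f₂, by rw [hK, mul_neg]⟩
  have hdvd₂ : f₂ ∣ kernelK d t := ⟨-f₁, by rw [hK, mul_neg, mul_comm]⟩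
  have hdeg : degreeOf 0 f₁ + degreeOf 0 f₂ ≤ 2 := by
    rw [← degreeOf_mul_eq hf₁0 hf₂0, ← degreeOf_neg, ← hK]
    exact degreeOf_zero_kernelK_le
  have h₂ := degreeOf_zero_ne_zero_of_dvd_kernelK h hx2 hy0 hdvd₂ hf₂
  exact irreducible_of_degreeOf_le_one hf₁0 hf₁ (by omega)
    fun g hg => degreeOf_zero_ne_zero_of_dvd_kernelK h hx2 hy0 (hg.trans hdvd₁)

end Kernel

theorem factors_conjugation (h : WalkHyp d t)
    (hx2 : ¬ (d 1 (-1) = 0 ∧ d 1 0 = 0 ∧ d 1 1 = 0))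
    (hy0 : ¬ (d (-1) (-1) = 0 ∧ d 0 (-1) = 0 ∧ d 1 (-1) = 0))
    (f₁ f₂ : MvPolynomial (Fin 2) ℂ)
    (hf₁ : f₁.totalDegree ≠ 0) (hf₂ : f₂.totalDegree ≠ 0)
    (hK : kernelK d t = -(f₁ * f₂)) :
    ∃ c : ℂ, c ≠ 0 ∧
      (MvPolynomial.map (starRingEnd ℂ) (C c * f₁) = C c⁻¹ * f₂ ∨
       MvPolynomial.map (starRingEnd ℂ) (C c * f₁) = -(C c⁻¹ * f₂) ∨
       ((∀ m : Fin 2 →₀ ℕ, ((C c * f₁).coeff m).im = 0) ∧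
        (∀ m : Fin 2 →₀ ℕ, ((C c⁻¹ * f₂).coeff m).im = 0))) := by
  have hnu : ∀ f : MvPolynomial (Fin 2) ℂ, f.totalDegree ≠ 0 → ¬ IsUnit f :=
    fun f hf hu => hf (isUnit_iff_totalDegree_of_isReduced.mp hu).2
  have hirr₁ := irreducible_of_kernelK_eq_neg_mul h hx2 hy0 hK (hnu f₁ hf₁) (hnu f₂ hf₂)
  have hirr₂ := irreducible_of_kernelK_eq_neg_mul h hx2 hy0 (by rw [hK, mul_comm])
    (hnu f₂ hf₂) (hnu f₁ hf₁)
  have hconj : map (starRingEnd ℂ) (f₁ * f₂) = f₁ * f₂ := by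
    simpa [hK] using map_starRingEnd_kernelK (d := d) (t := t)
  obtain ⟨c, hc0, hc⟩ := exists_rescaling_of_map_starRingEnd_mul_eq hirr₁ hirr₂ hconj
  refine ⟨c, hc0, hc.imp_right (Or.imp_right fun hreal => ?_)⟩
  exact ⟨im_coeff_eq_zero_of_map_starRingEnd_eq hreal.1,
    im_coeff_eq_zero_of_map_starRingEnd_eq hreal.2⟩

end
end

section
/- For a nondegenerate model of walk, if ([a:b],[c:d]) ∈ Ē_t satisfies Δ₁(a,b) = 0 and Δ₂(c,d) = 0, then ([a:b],[c:d]) is a singular point of the kernel curve Ē_t. -/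
open MvPolynomial

noncomputable section

variable (d : ℤ → ℤ → ℝ) (t : ℝ)

set_option maxHeartbeats 1000000 in
lemma aux_eval_Ky (a b c e : ℂ) :
    eval ![a, b, c, e] (kernelKbar d t) =
      eval ![a, b] (Abar1 d t) * c ^ 2 + eval ![a, b] (Bbar1 d t) * c * e +
        eval ![a, b] (Cbar1 d t) * e ^ 2 := by
  simp [kernelKbar, Abar1, Bbar1, Cbar1, Finset.sum_range_succ]
  ring

set_option maxHeartbeats 1000000 in
lemma aux_eval_Kx (a b c e : ℂ) :
    eval ![a, b, c, e] (kernelKbar d t) =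
      eval ![c, e] (Abar2 d t) * a ^ 2 + eval ![c, e] (Bbar2 d t) * a * b +
        eval ![c, e] (Cbar2 d t) * b ^ 2 := by
  simp [kernelKbar, Abar2, Bbar2, Cbar2, Finset.sum_range_succ]
  ring

set_option maxHeartbeats 1000000 in
lemma aux_pd0 (a b c e : ℂ) :
    eval ![a, b, c, e] (pderiv 0 (kernelKbar d t)) =
      2 * eval ![c, e] (Abar2 d t) * a + eval ![c, e] (Bbar2 d t) * b := by
  simp [kernelKbar, Abar2, Bbar2, Finset.sum_range_succ, pderiv_mul, pderiv_pow, pderiv_X]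
  ring

set_option maxHeartbeats 1000000 in
lemma aux_pd1 (a b c e : ℂ) :
    eval ![a, b, c, e] (pderiv 1 (kernelKbar d t)) =
      eval ![c, e] (Bbar2 d t) * a + 2 * eval ![c, e] (Cbar2 d t) * b := by
  simp [kernelKbar, Bbar2, Cbar2, Finset.sum_range_succ, pderiv_mul, pderiv_pow, pderiv_X]
  ring

set_option maxHeartbeats 1000000 in
lemma aux_pd2 (a b c e : ℂ) :
    eval ![a, b, c, e] (pderiv 2 (kernelKbar d t)) =
      2 * eval ![a, b] (Abar1 d t) * c + eval ![a, b] (Bbar1 d t) * e := by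
  simp [kernelKbar, Abar1, Bbar1, Finset.sum_range_succ, pderiv_mul, pderiv_pow, pderiv_X]
  ring

set_option maxHeartbeats 1000000 in
lemma aux_pd3 (a b c e : ℂ) :
    eval ![a, b, c, e] (pderiv 3 (kernelKbar d t)) =
      eval ![a, b] (Bbar1 d t) * c + 2 * eval ![a, b] (Cbar1 d t) * e := by
  simp [kernelKbar, Bbar1, Cbar1, Finset.sum_range_succ, pderiv_mul, pderiv_pow, pderiv_X]
  ring

/-- for a nondegenerate model, if `([a:b],[c:e]) ∈ Ē_t` with
`Δ₁(a,b) = 0` and `Δ₂(c,e) = 0`, then `([a:b],[c:e])` is a singular point of `Ē_t`. -/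
theorem singular_of_discriminants_vanish (h : WalkHyp d t) (hnd : ¬ Degenerate d t)
    (a b c e : ℂ) (hab : (a, b) ≠ (0, 0)) (hce : (c, e) ≠ (0, 0))
    (hon : OnKernelCurve d t a b c e)
    (h1 : eval ![a, b] (Delta1 d t) = 0) (h2 : eval ![c, e] (Delta2 d t) = 0) :
    SingularAt d t a b c e := by
  set A1 := eval ![a, b] (Abar1 d t) with hA1
  set B1 := eval ![a, b] (Bbar1 d t) with hB1
  set C1 := eval ![a, b] (Cbar1 d t) with hC1
  set A2 := eval ![c, e] (Abar2 d t) with hA2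
  set B2 := eval ![c, e] (Bbar2 d t) with hB2
  set C2 := eval ![c, e] (Cbar2 d t) with hC2
  have hKy : eval ![a, b, c, e] (kernelKbar d t) = A1 * c ^ 2 + B1 * c * e + C1 * e ^ 2 :=
    aux_eval_Ky d t a b c e
  have hKx : eval ![a, b, c, e] (kernelKbar d t) = A2 * a ^ 2 + B2 * a * b + C2 * b ^ 2 :=
    aux_eval_Kx d t a b c e
  have hD1 : B1 ^ 2 - 4 * A1 * C1 = 0 := by
    have := h1
    simp only [Delta1, map_sub, map_pow, map_mul, map_ofNat] at this
    linear_combination this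
  have hD2 : B2 ^ 2 - 4 * A2 * C2 = 0 := by
    have := h2
    simp only [Delta2, map_sub, map_pow, map_mul, map_ofNat] at this
    linear_combination this
  have hQ1 : A1 * c ^ 2 + B1 * c * e + C1 * e ^ 2 = 0 := by
    rw [← hKy]; exact hon
  have hQ2 : A2 * a ^ 2 + B2 * a * b + C2 * b ^ 2 = 0 := by
    rw [← hKx]; exact hon
  have e2 : 2 * A1 * c + B1 * e = 0 := by
    have : (2 * A1 * c + B1 * e) ^ 2 = 0 := by
      linear_combination 4 * A1 * hQ1 + e ^ 2 * hD1
    exact pow_eq_zero_iff (by norm_num) |>.mp this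
  have e3 : B1 * c + 2 * C1 * e = 0 := by
    have : (B1 * c + 2 * C1 * e) ^ 2 = 0 := by
      linear_combination 4 * C1 * hQ1 + c ^ 2 * hD1
    exact pow_eq_zero_iff (by norm_num) |>.mp this
  have e0 : 2 * A2 * a + B2 * b = 0 := by
    have : (2 * A2 * a + B2 * b) ^ 2 = 0 := by
      linear_combination 4 * A2 * hQ2 + b ^ 2 * hD2
    exact pow_eq_zero_iff (by norm_num) |>.mp this
  have e1 : B2 * a + 2 * C2 * b = 0 := by
    have : (B2 * a + 2 * C2 * b) ^ 2 = 0 := by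
      linear_combination 4 * C2 * hQ2 + a ^ 2 * hD2
    exact pow_eq_zero_iff (by norm_num) |>.mp this
  refine ⟨hon, ?_⟩
  intro k
  fin_cases k
  · show eval ![a, b, c, e] (pderiv 0 (kernelKbar d t)) = 0
    have hp : eval ![a, b, c, e] (pderiv 0 (kernelKbar d t)) = 2 * A2 * a + B2 * b :=
      aux_pd0 d t a b c e
    rw [hp]; exact e0
  · show eval ![a, b, c, e] (pderiv 1 (kernelKbar d t)) = 0
    have hp : eval ![a, b, c, e] (pderiv 1 (kernelKbar d t)) = B2 * a + 2 * C2 * b :=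
      aux_pd1 d t a b c e
    rw [hp]; exact e1
  · show eval ![a, b, c, e] (pderiv 2 (kernelKbar d t)) = 0
    have hp : eval ![a, b, c, e] (pderiv 2 (kernelKbar d t)) = 2 * A1 * c + B1 * e :=
      aux_pd2 d t a b c e
    rw [hp]; exact e2
  · show eval ![a, b, c, e] (pderiv 3 (kernelKbar d t)) = 0
    have hp : eval ![a, b, c, e] (pderiv 3 (kernelKbar d t)) = B1 * c + 2 * C1 * e :=
      aux_pd3 d t a b c e
    rw [hp]; exact e3

end
end
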